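/- arXiv:1812.06775 — 5 statements merged into one kernel-verified Lean document; each statement's English description precedes it below -/
import Mathlib

section
/- (Hadamard's inequality with equality condition.) Let M be a nonsingular real k×k matrix with column vectors c₁, …, c_k. Then ∏_{i=1}^k ‖c_i‖ ≥ |det M|, with equality if and only if the vectors c₁, …, c_k are pairwise orthogonal. -/
open Matrix
open scoped RealInnerProductSpace
open Module Finset InnerProductSpace

/-!
Gram–Schmidt applied to the columns `v` produces an orthonormal basis `g` in which `v` is upper
triangular, so `|det v| = ∏ |⟪g i, v i⟫|`. By Cauchy–Schwarz each factor is at most `‖v i‖`,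
which is Hadamard's inequality. When `det v ≠ 0` all factors are positive, so equality forces
equality in every Cauchy–Schwarz step, i.e. `v i ∈ ℝ ∙ g i` for all `i`, and the `v i` are then
orthogonal. Conversely, for orthogonal `v` Gram–Schmidt merely normalizes, `g i = v i / ‖v i‖`.
-/

theorem Finset.prod_eq_prod_iff_of_pos_of_le {ι R : Type*} [CommMonoidWithZero R]
    [PartialOrder R] [ZeroLEOneClass R] [PosMulStrictMono R] [Nontrivial R] {s : Finset ι}
    {f g : ι → R} (hf : ∀ i ∈ s, 0 < f i) (hfg : ∀ i ∈ s, f i ≤ g i) :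
    ∏ i ∈ s, f i = ∏ i ∈ s, g i ↔ ∀ i ∈ s, f i = g i := by
  refine ⟨fun h => ?_, prod_congr rfl⟩
  by_contra! hne
  obtain ⟨i, hi, hlt⟩ := hne
  exact (prod_lt_prod hf hfg ⟨i, hi, (hfg i hi).lt_of_ne hlt⟩).ne h

section InnerProductSpace

variable {E : Type*} [NormedAddCommGroup E] [InnerProductSpace ℝ E]

theorem abs_real_inner_le_norm_of_norm_eq_one {u : E} (hu : ‖u‖ = 1) (x : E) :
    |⟪u, x⟫| ≤ ‖x‖ := by
  simpa [hu] using abs_real_inner_le_norm u x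

theorem exists_eq_smul_of_abs_real_inner_eq_norm {u x : E} (hu : ‖u‖ = 1)
    (h : |⟪u, x⟫| = ‖x‖) : ∃ r : ℝ, x = r • u := by
  have hu₀ : u ≠ 0 := norm_ne_zero_iff.1 (by rw [hu]; exact one_ne_zero)
  have := ((norm_inner_eq_norm_tfae ℝ u x).out 0 2).1 (by rw [Real.norm_eq_abs, h, hu, one_mul])
  exact this.resolve_left hu₀

variable {ι : Type*} [Fintype ι] [DecidableEq ι]

theorem OrthonormalBasis.abs_det_eq_abs_det (b b' : OrthonormalBasis ι ℝ E) (v : ι → E) :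
    |b.toBasis.det v| = |b'.toBasis.det v| := by
  have hbb' : |b.toBasis.det b'| = 1 := by
    rcases b.det_to_matrix_orthonormalBasis_real b' with h | h <;> simp [h]
  rw [Basis.det_apply, ← Basis.toMatrix_mul_toMatrix b.toBasis b'.toBasis, det_mul, abs_mul,
    ← Basis.det_apply, b'.coe_toBasis, hbb', one_mul, Basis.det_apply]

/-- The orthonormal basis is the Gram–Schmidt basis of `v` for an auxiliary linear order on `ι`. -/
theorem OrthonormalBasis.exists_abs_det_eq_prod_abs_inner (b : OrthonormalBasis ι ℝ E)
    (v : ι → E) :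
    ∃ g : OrthonormalBasis ι ℝ E, |b.toBasis.det v| = ∏ i, |⟪g i, v i⟫| ∧
      ((Pairwise fun i j => ⟪v i, v j⟫ = 0) → ∀ i, |⟪g i, v i⟫| = ‖v i‖) := by
  let _ : LinearOrder ι := LinearOrder.lift' _ (Fintype.equivFin ι).injective
  let _ : LocallyFiniteOrderBot ι := .ofIic ι (fun a => {x | x ≤ a}) (by simp)
  have _ := b.toBasis.finiteDimensional_of_finite
  have hdim : finrank ℝ E = Fintype.card ι := finrank_eq_card_basis b.toBasis
  let g := gramSchmidtOrthonormalBasis hdim v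
  refine ⟨g, ?_, fun hv i => ?_⟩
  · have hg : |g.toBasis.det v| = ∏ i, |⟪g i, v i⟫| := by
      rw [gramSchmidtOrthonormalBasis_det, abs_prod]
    -- `convert` reconciles `DecidableEq ι` with the instance coming from the auxiliary order.
    convert (b.abs_det_eq_abs_det g v).trans hg
  · rcases eq_or_ne (v i) 0 with hi | hi
    · simp [hi]
    rw [gramSchmidtOrthonormalBasis_apply_of_orthogonal hdim hv hi, real_inner_smul_left,
      real_inner_self_eq_norm_sq, RCLike.ofReal_real_eq_id, id, abs_of_nonneg (by positivity)]
    field_simp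

theorem OrthonormalBasis.abs_det_le_prod_norm (b : OrthonormalBasis ι ℝ E) (v : ι → E) :
    |b.toBasis.det v| ≤ ∏ i, ‖v i‖ := by
  obtain ⟨g, hg, -⟩ := b.exists_abs_det_eq_prod_abs_inner v
  rw [hg]
  exact prod_le_prod (fun i _ => abs_nonneg _)
    fun i _ => abs_real_inner_le_norm_of_norm_eq_one (g.orthonormal.1 i) _

theorem OrthonormalBasis.abs_det_eq_prod_norm_iff (b : OrthonormalBasis ι ℝ E) {v : ι → E}
    (hv : b.toBasis.det v ≠ 0) :
    |b.toBasis.det v| = ∏ i, ‖v i‖ ↔ Pairwise fun i j => ⟪v i, v j⟫ = 0 := by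
  obtain ⟨g, hg, horth⟩ := b.exists_abs_det_eq_prod_abs_inner v
  refine ⟨fun heq => ?_, fun hvo => hg.trans (prod_congr rfl fun i _ => horth hvo i)⟩
  have hpos : ∀ i ∈ univ, 0 < |⟪g i, v i⟫| := by
    have := abs_ne_zero.2 hv
    rw [hg, prod_ne_zero_iff] at this
    exact fun i hi => (abs_nonneg _).lt_of_ne' (this i hi)
  have hfactor := (prod_eq_prod_iff_of_pos_of_le hpos
    fun i _ => abs_real_inner_le_norm_of_norm_eq_one (g.orthonormal.1 i) _).1 (hg ▸ heq)
  choose r hr using fun i =>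
    exists_eq_smul_of_abs_real_inner_eq_norm (g.orthonormal.1 i) (hfactor i (mem_univ i))
  intro i j hij
  rw [hr i, hr j, real_inner_smul_left, real_inner_smul_right, g.orthonormal.2 hij, mul_zero,
    mul_zero]

end InnerProductSpace

theorem EuclideanSpace.basisFun_det_toLp_transpose {ι : Type*} [Fintype ι] [DecidableEq ι]
    (M : Matrix ι ι ℝ) :
    (EuclideanSpace.basisFun ι ℝ).toBasis.det (fun i => WithLp.toLp 2 (Mᵀ i)) = M.det := by
  rw [Basis.det_apply]
  rfl

/-- **Hadamard's inequality with equality condition.** For a nonsingular real `k × k` matrix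
`M` with columns `c₁, …, c_k`, one has `∏_i ‖c_i‖ ≥ |det M|`, with equality if and only if
the columns are pairwise orthogonal. -/
theorem hadamard_inequality_with_equality
    (k : ℕ) (M : Matrix (Fin k) (Fin k) ℝ) (hM : M.det ≠ 0) :
    |M.det| ≤ ∏ i, ‖(WithLp.equiv 2 (Fin k → ℝ)).symm (fun r => M r i)‖ ∧
    ((∏ i, ‖(WithLp.equiv 2 (Fin k → ℝ)).symm (fun r => M r i)‖) = |M.det| ↔
      ∀ i j, i ≠ j →
        ⟪(WithLp.equiv 2 (Fin k → ℝ)).symm (fun r => M r i),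
          (WithLp.equiv 2 (Fin k → ℝ)).symm (fun r => M r j)⟫ = 0) := by
  have hdet := EuclideanSpace.basisFun_det_toLp_transpose M
  rw [← hdet] at hM ⊢
  rw [eq_comm]
  exact ⟨(EuclideanSpace.basisFun (Fin k) ℝ).abs_det_le_prod_norm _,
    (EuclideanSpace.basisFun (Fin k) ℝ).abs_det_eq_prod_norm_iff hM⟩
end

section
/- (Axes-preserving linear mappings.) Let M be a real n×d matrix with d < n such that the Gram matrix MᵀM has d distinct nonzero eigenvalues (equivalently, M has d distinct nonzero singular values). Then the following are equivalent: (a) the columns of M are pairwise orthogonal; (b) for every factorization M = U Σ Vᵀ in which U is an n×n orthogonal matrix, V is a d×d orthogonal matrix, and Σ is the n×d matrix given by Σ_{ij} = s_j if i = j and 0 otherwise for some nonnegative reals s₁, …, s_d, the matrix of absolute values |V| (with entries |V_{ij}|) is a permutation matrix. -/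
/-!
Write `G = MᵀM`; the columns of `M` are orthogonal exactly when `G` is diagonal.
An SVD `M = U Σ Vᵀ` gives `G = V diag(s²) Vᵀ`, and comparing it with the spectral decomposition
`G = W diag(λ) Wᵀ` shows that the `s_j²` are a permutation of the distinct eigenvalues `λ`.
If `G = diag(g)`, then `g_i V_ij = V_ij s_j²`, so every row of `V` has a single nonzero entry,
and orthogonality of `V` forces these entries to be `±1` in a permutation pattern.
Conversely, the columns of `M W` are orthogonal with norms `√λ_k`, so they extend to an SVD
`M = U diag(√λ) Wᵀ`; if `|W|` is a permutation matrix, then `G = W diag(λ) Wᵀ` is diagonal.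
-/

open Matrix
open scoped RealInnerProductSpace

/-- A square real matrix is a permutation matrix if it is a 0–1 matrix with exactly one `1`
in every row and every column, i.e. it is the matrix of some permutation. -/
def IsPermutationMatrix {d : ℕ} (P : Matrix (Fin d) (Fin d) ℝ) : Prop :=
  ∃ σ : Equiv.Perm (Fin d), ∀ i j, P i j = if σ i = j then 1 else 0

namespace Matrix

section Square

variable {ι : Type*} [Fintype ι] [DecidableEq ι]

theorem abs_apply_eq_ite_of_mul_transpose_eq_one {W : Matrix ι ι ℝ} (hW : W * Wᵀ = 1)
    {f : ι → ι} (hf : ∀ i j, W i j ≠ 0 → j = f i) :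
    f.Injective ∧ ∀ i j, |W i j| = if f i = j then 1 else 0 := by
  have hrow : ∀ i i', W i (f i) * W i' (f i) = if i = i' then 1 else 0 := by
    intro i i'
    rw [← one_apply, ← hW, mul_apply, Finset.sum_eq_single (f i)]
    · rfl
    · intro k _ hk
      rw [transpose_apply]
      by_cases h : W i k = 0
      · rw [h, zero_mul]
      · exact absurd (hf i k h) hk
    · simp
  have hdiag : ∀ i, |W i (f i)| = 1 := fun i => by
    rcases mul_self_eq_one_iff.mp ((hrow i i).trans (if_pos rfl)) with h | h <;> simp [h]
  have hne : ∀ i, W i (f i) ≠ 0 := fun i h => by simpa [h] using hdiag i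
  refine ⟨fun i i' hii' => ?_, fun i j => ?_⟩
  · by_contra h
    have := hrow i i'
    rw [if_neg h, hii'] at this
    exact mul_ne_zero (hii' ▸ hne i) (hne i') this
  · split_ifs with h
    · exact h ▸ hdiag i
    · by_contra h0
      exact h (hf i j (abs_ne_zero.mp h0)).symm

theorem exists_perm_abs_eq_of_diagonal_mul_eq_mul_diagonal {W : Matrix ι ι ℝ}
    (hW : W * Wᵀ = 1) {g μ : ι → ℝ} (hμ : μ.Injective) (h : diagonal g * W = W * diagonal μ) :
    ∃ σ : Equiv.Perm ι, (∀ i j, |W i j| = if σ i = j then 1 else 0) ∧ ∀ i, g i = μ (σ i) := by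
  have heig : ∀ i j, W i j ≠ 0 → g i = μ j := fun i j hij => by
    have := congrFun (congrFun h i) j
    rw [diagonal_mul, mul_diagonal, mul_comm] at this
    exact mul_left_cancel₀ hij this
  have hrow : ∀ i, ∃ j, W i j ≠ 0 := fun i => by
    by_contra! h0
    simpa [mul_apply, h0] using congrFun (congrFun hW i) i
  choose f hf using hrow
  obtain ⟨hinj, habs⟩ := abs_apply_eq_ite_of_mul_transpose_eq_one hW (f := f)
    fun i j hij => hμ ((heig i j hij).symm.trans (heig i (f i) (hf i)))
  exact ⟨Equiv.ofBijective f (Finite.injective_iff_bijective.mp hinj), habs,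
    fun i => heig i (f i) (hf i)⟩

theorem mul_eq_mul_of_eq_mul_mul_transpose {A V D : Matrix ι ι ℝ} (hV : Vᵀ * V = 1)
    (h : A = V * D * Vᵀ) : A * V = V * D := by
  rw [h, Matrix.mul_assoc, hV, Matrix.mul_one]

theorem injective_of_conj_diagonal_eq {V W : Matrix ι ι ℝ} {μ ν : ι → ℝ} (hV : Vᵀ * V = 1)
    (hW : Wᵀ * W = 1) (hν : ν.Injective)
    (h : V * diagonal μ * Vᵀ = W * diagonal ν * Wᵀ) : μ.Injective := by
  have hX : Vᵀ * W * (Vᵀ * W)ᵀ = 1 := by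
    rw [transpose_mul, transpose_transpose, Matrix.mul_assoc, ← Matrix.mul_assoc W,
      mul_eq_one_comm.mp hW, Matrix.one_mul, hV]
  have hcomm : diagonal μ * (Vᵀ * W) = Vᵀ * W * diagonal ν := by
    calc diagonal μ * (Vᵀ * W) = Vᵀ * (V * diagonal μ * Vᵀ) * W := by
          simp only [← Matrix.mul_assoc, hV, Matrix.one_mul]
      _ = Vᵀ * W * diagonal ν := by
          rw [h, Matrix.mul_assoc, mul_eq_mul_of_eq_mul_mul_transpose hW rfl,
            Matrix.mul_assoc]
  obtain ⟨σ, -, hμ⟩ := exists_perm_abs_eq_of_diagonal_mul_eq_mul_diagonal hX hν hcomm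
  rw [show μ = ν ∘ σ from funext hμ]
  exact hν.comp σ.injective

theorem mul_diagonal_mul_transpose_apply_eq_zero_of_abs_eq {W : Matrix ι ι ℝ} {σ : Equiv.Perm ι}
    (hσ : ∀ i j, |W i j| = if σ i = j then 1 else 0) (μ : ι → ℝ) {i j : ι} (hij : i ≠ j) :
    (W * diagonal μ * Wᵀ) i j = 0 := by
  rw [mul_apply]
  refine Finset.sum_eq_zero fun k _ => ?_
  rw [mul_diagonal, transpose_apply]
  by_cases hk : σ i = k
  · have hjk : σ j ≠ k := fun h => hij (σ.injective (hk.trans h.symm))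
    rw [abs_eq_zero.mp ((hσ j k).trans (if_neg hjk)), mul_zero]
  · rw [abs_eq_zero.mp ((hσ i k).trans (if_neg hk)), zero_mul, zero_mul]

theorem IsHermitian.exists_orthogonal_eq_mul_diagonal_eigenvalues_mul_transpose
    {A : Matrix ι ι ℝ} (hA : A.IsHermitian) :
    ∃ W : Matrix ι ι ℝ, Wᵀ * W = 1 ∧ A = W * diagonal hA.eigenvalues * Wᵀ := by
  refine ⟨hA.eigenvectorUnitary, ?_, ?_⟩
  · simpa [star_eq_conjTranspose] using mem_unitaryGroup_iff'.mp hA.eigenvectorUnitary.2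
  · simpa [star_eq_conjTranspose] using hA.spectral_theorem

end Square

theorem inner_col_eq_transpose_mul_self_apply {m k : Type*} [Fintype m] (M : Matrix m k ℝ)
    (i j : k) :
    ⟪(WithLp.equiv 2 (m → ℝ)).symm (fun r => M r i),
      (WithLp.equiv 2 (m → ℝ)).symm (fun r => M r j)⟫ = (Mᵀ * M) i j := by
  simp [PiLp.inner_apply, mul_apply, mul_comm]

section Rectangular

variable {R : Type*} {n d : ℕ}

def rectDiagonal (n : ℕ) [Zero R] (s : Fin d → R) : Matrix (Fin n) (Fin d) R :=
  of fun i j => if (i : ℕ) = (j : ℕ) then s j else 0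

theorem mul_rectDiagonal_apply [NonUnitalNonAssocSemiring R] {m : Type*} (hdn : d ≤ n)
    (U : Matrix m (Fin n) R) (s : Fin d → R) (r : m) (k : Fin d) :
    (U * rectDiagonal n s) r k = U r (Fin.castLE hdn k) * s k := by
  rw [mul_apply, Finset.sum_eq_single (Fin.castLE hdn k)]
  · simp [rectDiagonal]
  · intro i _ hi
    have : (i : ℕ) ≠ k := fun h => hi (Fin.ext h)
    simp [rectDiagonal, this]
  · simp

theorem transpose_rectDiagonal_mul_rectDiagonal [Semiring R] (hdn : d ≤ n) (s : Fin d → R) :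
    (rectDiagonal n s)ᵀ * rectDiagonal n s = diagonal fun k => s k ^ 2 := by
  ext j k
  rw [mul_rectDiagonal_apply hdn, transpose_apply, diagonal_apply]
  by_cases h : j = k
  · simp [rectDiagonal, h, sq]
  · have : (k : ℕ) ≠ j := fun e => h (Fin.ext e.symm)
    simp [rectDiagonal, h, this]

theorem transpose_mul_self_eq_of_eq_mul_rectDiagonal_mul_transpose [CommSemiring R]
    (hdn : d ≤ n) {M : Matrix (Fin n) (Fin d) R} {U : Matrix (Fin n) (Fin n) R}
    {V : Matrix (Fin d) (Fin d) R} {s : Fin d → R} (hU : Uᵀ * U = 1)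
    (hM : M = U * rectDiagonal n s * Vᵀ) :
    Mᵀ * M = V * diagonal (fun k => s k ^ 2) * Vᵀ := by
  rw [hM, ← transpose_rectDiagonal_mul_rectDiagonal hdn]
  simp only [transpose_mul, transpose_transpose, Matrix.mul_assoc]
  rw [← Matrix.mul_assoc Uᵀ, hU, Matrix.one_mul]

theorem exists_eq_mul_rectDiagonal (hdn : d ≤ n) {A : Matrix (Fin n) (Fin d) ℝ}
    {s : Fin d → ℝ} (hs : ∀ k, 0 < s k) (hA : Aᵀ * A = diagonal fun k => s k ^ 2) :
    ∃ U : Matrix (Fin n) (Fin n) ℝ, Uᵀ * U = 1 ∧ A = U * rectDiagonal n s := by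
  set c : Fin d → EuclideanSpace ℝ (Fin n) := fun k => (WithLp.equiv 2 _).symm fun r => A r k
  have hc : ∀ a b, ⟪c a, c b⟫ = if a = b then s a ^ 2 else 0 := fun a b => by
    rw [inner_col_eq_transpose_mul_self_apply, hA, diagonal_apply]
  have hnorm : ∀ k, ‖c k‖ = s k := fun k => by
    have := hc k k
    rw [if_pos rfl, real_inner_self_eq_norm_sq] at this
    exact (pow_left_inj₀ (norm_nonneg _) (hs k).le two_ne_zero).mp this
  set f : Fin n → EuclideanSpace ℝ (Fin n) := Function.extend (Fin.castLE hdn) c 0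
  have hf : ∀ k, f (Fin.castLE hdn k) = c k := (Fin.castLE_injective hdn).extend_apply c 0
  have horth : Pairwise fun i j => ⟪f i, f j⟫ = 0 := by
    intro i j hij
    by_cases hi : ∃ a, Fin.castLE hdn a = i
    · by_cases hj : ∃ b, Fin.castLE hdn b = j
      · obtain ⟨a, rfl⟩ := hi
        obtain ⟨b, rfl⟩ := hj
        rw [hf, hf, hc, if_neg fun h => hij (congrArg _ h)]
      · rw [show f j = 0 from Function.extend_apply' _ _ _ hj, inner_zero_right]
    · rw [show f i = 0 from Function.extend_apply' _ _ _ hi, inner_zero_left]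
  -- Gram–Schmidt keeps the nonzero vectors of an orthogonal family, normalised.
  let b := InnerProductSpace.gramSchmidtOrthonormalBasis finrank_euclideanSpace f
  have hb : ∀ k, b (Fin.castLE hdn k) = (s k)⁻¹ • c k := fun k => by
    have hck : f (Fin.castLE hdn k) ≠ 0 := by
      rw [hf, ← norm_pos_iff, hnorm]
      exact hs k
    rw [InnerProductSpace.gramSchmidtOrthonormalBasis_apply_of_orthogonal _ horth hck, hf, hnorm]
    rfl
  refine ⟨(EuclideanSpace.basisFun (Fin n) ℝ).toBasis.toMatrix b, ?_, ?_⟩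
  · simpa using OrthonormalBasis.toMatrix_orthonormalBasis_conjTranspose_mul_self _ b
  · ext r k
    rw [mul_rectDiagonal_apply hdn, Module.Basis.toMatrix_apply, hb]
    have := (hs k).ne'
    simp only [c, WithLp.equiv_symm_apply, map_smul, Finsupp.coe_smul, Pi.smul_apply,
      OrthonormalBasis.coe_toBasis_repr_apply, EuclideanSpace.basisFun_repr, smul_eq_mul]
    field_simp

end Rectangular

end Matrix

/-- **Axes-preserving linear mappings.** Let `M` be a real `n × d` matrix with `d < n` whose
Gram matrix `MᵀM` has `d` distinct nonzero eigenvalues (equivalently, `M` has `d` distinct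
nonzero singular values). Then the columns of `M` are pairwise orthogonal if and only if in
every singular value decomposition `M = U Σ Vᵀ` (with `U`, `V` orthogonal and `Σ` the `n × d`
matrix with nonnegative entries `s_j` on the main diagonal and `0` elsewhere), the matrix of
absolute values `|V|` is a permutation matrix. -/
theorem axes_preserving_iff_abs_svd_factor_perm
    (n d : ℕ) (hdn : d < n) (M : Matrix (Fin n) (Fin d) ℝ)
    (hH : (Mᵀ * M).IsHermitian)
    (hdist : Function.Injective hH.eigenvalues)
    (hnz : ∀ j, hH.eigenvalues j ≠ 0) :
    (∀ i j, i ≠ j →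
        ⟪(WithLp.equiv 2 (Fin n → ℝ)).symm (fun r => M r i),
          (WithLp.equiv 2 (Fin n → ℝ)).symm (fun r => M r j)⟫ = 0) ↔
      (∀ (U : Matrix (Fin n) (Fin n) ℝ) (V : Matrix (Fin d) (Fin d) ℝ) (s : Fin d → ℝ),
        Uᵀ * U = 1 → Vᵀ * V = 1 → (∀ j, 0 ≤ s j) →
        M = U * (Matrix.of fun (i : Fin n) (j : Fin d) =>
          if (i : ℕ) = (j : ℕ) then s j else 0) * Vᵀ →
        IsPermutationMatrix (V.map fun x => |x|)) := by
  obtain ⟨W, hW, hGW⟩ := hH.exists_orthogonal_eq_mul_diagonal_eigenvalues_mul_transpose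
  simp only [inner_col_eq_transpose_mul_self_apply]
  constructor
  · intro horth U V s hU hV _ hM
    have hGV := transpose_mul_self_eq_of_eq_mul_rectDiagonal_mul_transpose hdn.le hU hM
    have hdiag : Mᵀ * M = diagonal fun i => (Mᵀ * M) i i := by
      ext i j
      by_cases h : i = j
      · simp [h]
      · rw [diagonal_apply_ne _ h, horth i j h]
    have hs := injective_of_conj_diagonal_eq hV hW hdist (hGV.symm.trans hGW)
    have hcomm : diagonal (fun i => (Mᵀ * M) i i) * V = V * diagonal fun k => s k ^ 2 := by
      rw [← hdiag]
      exact mul_eq_mul_of_eq_mul_mul_transpose hV hGV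
    obtain ⟨σ, hσ, -⟩ :=
      exists_perm_abs_eq_of_diagonal_mul_eq_mul_diagonal (mul_eq_one_comm.mp hV) hs hcomm
    exact ⟨σ, hσ⟩
  · intro h i j hij
    have hpos : ∀ k, 0 < hH.eigenvalues k := fun k =>
      ((posSemidef_conjTranspose_mul_self M).eigenvalues_nonneg k).lt_of_ne' (hnz k)
    have hGram : (M * W)ᵀ * (M * W) = diagonal fun k => √(hH.eigenvalues k) ^ 2 := by
      simp only [Real.sq_sqrt (hpos _).le]
      rw [transpose_mul, Matrix.mul_assoc, ← Matrix.mul_assoc Mᵀ,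
        mul_eq_mul_of_eq_mul_mul_transpose hW hGW, ← Matrix.mul_assoc, hW, Matrix.one_mul]
    obtain ⟨U, hU, hMW⟩ :=
      exists_eq_mul_rectDiagonal hdn.le (fun k => Real.sqrt_pos.mpr (hpos k)) hGram
    have hM : M = U * rectDiagonal n (fun k => √(hH.eigenvalues k)) * Wᵀ := by
      rw [← hMW, Matrix.mul_assoc, mul_eq_one_comm.mp hW, Matrix.mul_one]
    obtain ⟨σ, hσ⟩ := h U W _ hU hW (fun k => Real.sqrt_nonneg _) hM
    rw [hGW]
    exact mul_diagonal_mul_transpose_apply_eq_zero_of_abs_eq hσ _ hij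
end

section
/- (Main theorem, global lower bound — part (b), inequality.) Let n, d, N be positive naturals with d ≤ n. For i = 1, …, N let M_i be a real n×d matrix with rank M_i = d, let V_i be a d×d orthogonal matrix, and let σ_{ij} > 0 for j = 1, …, d, subject to the constraint Σ_{i=1}^N Σ_{j=1}^d (−log σ_{ij}²) = C. Denote by c_{ij} the j-th column of the matrix M_i V_iᵀ. Then Σ_{i=1}^N log( Σ_{j=1}^d ‖c_{ij}‖² σ_{ij}² ) ≥ N·log d − C/d + (1/d) Σ_{i=1}^N log det(M_iᵀ M_i). -/
open Matrix Real

/-!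
Put `A = M Vᵀ`. Since `V` is orthogonal, `AᵀA = V (MᵀM) Vᵀ` has the determinant of `MᵀM`,
and it is positive definite because `M` has full column rank; its diagonal entries are the
squared column norms `‖c_j‖²`. Hadamard's inequality `det (AᵀA) ≤ ∏ ‖c_j‖²`, proved by
rescaling to unit diagonal and applying AM-GM to the eigenvalues, together with AM-GM
(concavity of `log`) for the numbers `‖c_j‖² σ_j²`, gives for every sample
`log ∑ ‖c_j‖² σ_j² ≥ log d + (log det (MᵀM) + ∑ log σ_j²) / d`.
Summing over the samples and inserting the constraint on the `σ_{ij}` gives the bound.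
-/

namespace Real

theorem prod_le_one_of_sum_eq_card {ι : Type*} [Fintype ι] {x : ι → ℝ}
    (hx : ∀ i, 0 ≤ x i) (hsum : ∑ i, x i = Fintype.card ι) : ∏ i, x i ≤ 1 :=
  calc ∏ i, x i ≤ ∏ i, exp (x i - 1) :=
        Finset.prod_le_prod (fun i _ => hx i) fun i _ => by linarith [add_one_le_exp (x i - 1)]
    _ = 1 := by simp [← exp_sum, Finset.sum_sub_distrib, hsum]

theorem log_card_add_inv_card_mul_sum_log_le_log_sum {ι : Type*} [Fintype ι] {x : ι → ℝ}
    (hx : ∀ i, 0 < x i) :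
    log (Fintype.card ι) + (Fintype.card ι : ℝ)⁻¹ * ∑ i, log (x i) ≤
      log (∑ i, x i) := by
  rcases isEmpty_or_nonempty ι with _ | _
  · simp
  have hcard : (Fintype.card ι : ℝ) ≠ 0 := by positivity
  have hsum : 0 < ∑ i, x i := Finset.sum_pos (fun i _ => hx i) Finset.univ_nonempty
  have hjensen := strictConcaveOn_log_Ioi.concaveOn.le_map_sum (t := Finset.univ)
    (w := fun _ => (Fintype.card ι : ℝ)⁻¹) (p := x) (fun _ _ => by positivity)
    (by simp [hcard]) fun i _ => hx i
  simp only [smul_eq_mul, ← Finset.mul_sum] at hjensen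
  rw [log_mul (inv_ne_zero hcard) hsum.ne', log_inv] at hjensen
  linarith

end Real

namespace Matrix

theorem mulVec_injective_of_rank_eq_card {K m n : Type*} [Field K] [Fintype m] [Fintype n]
    [DecidableEq n] {A : Matrix m n K} (hA : A.rank = Fintype.card n) :
    Function.Injective A.mulVec := by
  have hker := LinearMap.finrank_range_add_finrank_ker A.mulVecLin
  rw [← rank, hA, Module.finrank_fintype_fun_eq_card, add_eq_left,
    Submodule.finrank_eq_zero] at hker
  exact LinearMap.ker_eq_bot.mp hker

theorem norm_sq_col_eq_transpose_mul_self_diag {m n : Type*} [Fintype m] (A : Matrix m n ℝ)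
    (j : n) : ‖(WithLp.equiv 2 (m → ℝ)).symm (fun r => A r j)‖ ^ 2 = (Aᵀ * A) j j := by
  rw [EuclideanSpace.norm_eq, Real.sq_sqrt (by positivity)]
  simp [mul_apply, sq]

variable {m n : Type*} [Fintype m] [Fintype n] [DecidableEq n]

theorem PosSemidef.det_le_one_of_diag_eq_one {C : Matrix n n ℝ} (hC : C.PosSemidef)
    (hdiag : ∀ j, C j j = 1) : C.det ≤ 1 := by
  have htrace : ∑ i, hC.isHermitian.eigenvalues i = Fintype.card n := by
    simpa [trace, hdiag] using hC.isHermitian.trace_eq_sum_eigenvalues.symm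
  rw [hC.isHermitian.det_eq_prod_eigenvalues]
  exact_mod_cast Real.prod_le_one_of_sum_eq_card hC.eigenvalues_nonneg htrace

theorem PosDef.det_le_prod_diag {B : Matrix n n ℝ} (hB : B.PosDef) : B.det ≤ ∏ j, B j j := by
  set g : n → ℝ := fun j => (√(B j j))⁻¹
  have hg : ∀ j, g j * B j j * g j = 1 := fun j => by
    have : √(B j j) ≠ 0 := (Real.sqrt_pos.2 hB.diag_pos).ne'
    simp only [g]
    field_simp
    exact (Real.sq_sqrt hB.diag_pos.le).symm
  have hC : (diagonal g * B * diagonal g).PosSemidef := by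
    simpa using hB.posSemidef.conjTranspose_mul_mul_same (diagonal g)
  have hdet := hC.det_le_one_of_diag_eq_one fun j => by simp [diagonal_mul, mul_diagonal, hg]
  have hprod : (∏ j, g j) * (∏ j, g j) * ∏ j, B j j = 1 := by
    rw [← Finset.prod_mul_distrib, ← Finset.prod_mul_distrib]
    exact Finset.prod_eq_one fun j _ => by rw [← hg j]; ring
  rw [det_mul, det_mul, det_diagonal] at hdet
  nlinarith [Finset.prod_pos fun j (_ : j ∈ Finset.univ) => hB.diag_pos (i := j)]

theorem PosDef.log_card_add_inv_card_mul_log_det_add_sum_log_le_log_sum_diag_mul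
    {B : Matrix n n ℝ} (hB : B.PosDef) {w : n → ℝ} (hw : ∀ j, 0 < w j) :
    log (Fintype.card n) + (Fintype.card n : ℝ)⁻¹ * (log B.det + ∑ j, log (w j)) ≤
      log (∑ j, B j j * w j) := by
  have hlog_det : log B.det ≤ ∑ j, log (B j j) := by
    rw [← log_prod fun j _ => hB.diag_pos.ne']
    exact log_le_log hB.det_pos hB.det_le_prod_diag
  calc log (Fintype.card n) + (Fintype.card n : ℝ)⁻¹ * (log B.det + ∑ j, log (w j))
      ≤ log (Fintype.card n) + (Fintype.card n : ℝ)⁻¹ * ∑ j, log (B j j * w j) := by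
        simp only [log_mul hB.diag_pos.ne' (hw _).ne', Finset.sum_add_distrib]
        gcongr
    _ ≤ log (∑ j, B j j * w j) :=
        log_card_add_inv_card_mul_sum_log_le_log_sum fun j => mul_pos hB.diag_pos (hw j)

theorem det_transpose_mul_self_of_mul_transpose_orthogonal (M : Matrix m n ℝ)
    {V : Matrix n n ℝ} (hV : Vᵀ * V = 1) : ((M * Vᵀ)ᵀ * (M * Vᵀ)).det = (Mᵀ * M).det := by
  have hdetV : V.det * V.det = 1 := by simpa using congrArg det hV
  have hgram : (M * Vᵀ)ᵀ * (M * Vᵀ) = V * (Mᵀ * M) * Vᵀ := by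
    simp [transpose_mul, Matrix.mul_assoc]
  rw [hgram, det_mul, det_mul, det_transpose]
  linear_combination (Mᵀ * M).det * hdetV

theorem log_card_add_inv_card_mul_log_det_add_sum_log_le_log_sum_norm_sq_col_mul
    (M : Matrix m n ℝ) (hM : M.rank = Fintype.card n) {V : Matrix n n ℝ} (hV : Vᵀ * V = 1)
    {s : n → ℝ} (hs : ∀ j, 0 < s j) :
    log (Fintype.card n) + (Fintype.card n : ℝ)⁻¹ * (log (Mᵀ * M).det + ∑ j, log (s j ^ 2)) ≤
      log (∑ j, ‖(WithLp.equiv 2 (m → ℝ)).symm (fun r => (M * Vᵀ) r j)‖ ^ 2 * s j ^ 2) := by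
  have hVt : Function.Injective Vᵀ.mulVec :=
    Function.LeftInverse.injective (g := V.mulVec) fun x => by
      rw [mulVec_mulVec, mul_eq_one_comm.mp hV, one_mulVec]
  have hinj : Function.Injective (M * Vᵀ).mulVec := by
    simpa [Function.comp_def, mulVec_mulVec] using
      (mulVec_injective_of_rank_eq_card hM).comp hVt
  have hB : ((M * Vᵀ)ᵀ * (M * Vᵀ)).PosDef := by
    simpa using PosDef.conjTranspose_mul_self _ hinj
  have hbound := hB.log_card_add_inv_card_mul_log_det_add_sum_log_le_log_sum_diag_mul
    fun j => pow_pos (hs j) 2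
  rw [det_transpose_mul_self_of_mul_transpose_orthogonal M hV] at hbound
  simpa only [norm_sq_col_eq_transpose_mul_self_diag] using hbound

end Matrix

theorem vae_global_lower_bound_general
    (n d N : ℕ)
    (M : Fin N → Matrix (Fin n) (Fin d) ℝ) (hrank : ∀ i, (M i).rank = d)
    (V : Fin N → Matrix (Fin d) (Fin d) ℝ) (hV : ∀ i, (V i)ᵀ * V i = 1)
    (σ : Fin N → Fin d → ℝ) (hσ : ∀ i j, 0 < σ i j)
    (C : ℝ) (hC : (∑ i, ∑ j, (-Real.log ((σ i j) ^ 2))) = C) :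
    (N : ℝ) * Real.log d - C / d +
        (1 / d : ℝ) * ∑ i, Real.log ((M i)ᵀ * M i).det ≤
      ∑ i, Real.log (∑ j,
        ‖(WithLp.equiv 2 (Fin n → ℝ)).symm (fun r => (M i * (V i)ᵀ) r j)‖ ^ 2 *
          (σ i j) ^ 2) := by
  have hsample i :=
    Matrix.log_card_add_inv_card_mul_log_det_add_sum_log_le_log_sum_norm_sq_col_mul
      (M i) (by simpa using hrank i) (hV i) (hσ i)
  simp only [Fintype.card_fin] at hsample
  calc (N : ℝ) * Real.log d - C / d + (1 / d : ℝ) * ∑ i, Real.log ((M i)ᵀ * M i).det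
      = ∑ i, (Real.log d +
          (d : ℝ)⁻¹ * (Real.log ((M i)ᵀ * M i).det + ∑ j, Real.log (σ i j ^ 2))) := by
        simp only [← hC, Real.log_pow, Finset.sum_add_distrib, ← Finset.mul_sum,
          Finset.sum_neg_distrib, Finset.sum_const, Finset.card_univ, Fintype.card_fin,
          nsmul_eq_mul, one_div]
        ring
    _ ≤ _ := Finset.sum_le_sum fun i _ => hsample i

/-- **Main theorem, part (b): global lower bound.** For matrices `M_i` of rank `d`,
orthogonal `V_i`, and positive `σ_{ij}` subject to `∑_{i,j} (−log σ_{ij}²) = C`, letting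
`c_{ij}` denote the `j`-th column of `M_i V_iᵀ`,
`∑_i log (∑_j ‖c_{ij}‖² σ_{ij}²) ≥ N log d − C/d + (1/d) ∑_i log det (M_iᵀ M_i)`. -/
theorem vae_global_lower_bound
    (n d N : ℕ) (hn : 0 < n) (hd : 0 < d) (hN : 0 < N) (hdn : d ≤ n)
    (M : Fin N → Matrix (Fin n) (Fin d) ℝ) (hrank : ∀ i, (M i).rank = d)
    (V : Fin N → Matrix (Fin d) (Fin d) ℝ) (hV : ∀ i, (V i)ᵀ * V i = 1)
    (σ : Fin N → Fin d → ℝ) (hσ : ∀ i j, 0 < σ i j)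
    (C : ℝ) (hC : (∑ i, ∑ j, (-Real.log ((σ i j) ^ 2))) = C) :
    (N : ℝ) * Real.log d - C / d +
        (1 / d : ℝ) * ∑ i, Real.log ((M i)ᵀ * M i).det ≤
      ∑ i, Real.log (∑ j,
        ‖(WithLp.equiv 2 (Fin n → ℝ)).symm (fun r => (M i * (V i)ᵀ) r j)‖ ^ 2 *
          (σ i j) ^ 2) :=
  vae_global_lower_bound_general n d N M hrank V hV σ hσ C hC
end

section
/- (Main theorem, characterization of global minima — part (b), equality condition.) In the setting of the global lower bound — n, d, N positive naturals with d ≤ n; matrices M_i of rank d; orthogonal V_i; σ_{ij} > 0 with Σ_{i,j} (−log σ_{ij}²) = C; c_{ij} the j-th column of M_i V_iᵀ — equality Σ_i log( Σ_j ‖c_{ij}‖² σ_{ij}² ) = N·log d − C/d + (1/d) Σ_i log det(M_iᵀ M_i) holds if and only if for every i the columns c_{i1}, …, c_{id} of M_i V_iᵀ are pairwise orthogonal and the quantities ‖c_{ij}‖² σ_{ij}² are equal for all j ∈ {1, …, d}. In particular, at every global minimum of the constrained problem, every matrix M_i V_iᵀ has pairwise orthogonal columns. -/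
/-!
Fix `i`, drop it from `M, V, σ`, and let `c_j = (M Vᵀ) e_j`. The vectors `σ_j c_j` are linearly
independent, so their Gram matrix `H = diag σ · (M Vᵀ)ᵀ (M Vᵀ) · diag σ` is positive definite, with
`tr H = ∑ ‖c_j‖² σ_j²` and, `V` being orthogonal, `det H = det (MᵀM) ∏ σ_j²`. AM–GM for the
eigenvalues of `H` gives `log tr H ≥ log d + (log det H) / d`, with equality iff `H` is a multiple
of the identity, i.e. iff the `c_j` are pairwise orthogonal and the `‖c_j‖² σ_j²` are all equal.
Summing over `i` gives the global bound, which is attained iff it is attained for every `i`.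
-/

open Matrix Finset Real
open scoped RealInnerProductSpace

namespace Real

variable {ι : Type*} [Fintype ι] {μ : ι → ℝ}

lemma sum_inv_card_smul_log :
    ∑ j, (Fintype.card ι : ℝ)⁻¹ • log (μ j) = (∑ j, log (μ j)) / Fintype.card ι := by
  rw [← smul_sum, smul_eq_mul, inv_mul_eq_div]

variable [Nonempty ι]

lemma log_sum_inv_card_smul (hμ : ∀ j, 0 < μ j) :
    log (∑ j, (Fintype.card ι : ℝ)⁻¹ • μ j) = log (∑ j, μ j) - log (Fintype.card ι) := by
  rw [← smul_sum, smul_eq_mul,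
    log_mul (by positivity) (sum_pos (fun j _ => hμ j) univ_nonempty).ne', log_inv]
  ring

theorem log_card_add_sum_log_div_le_log_sum (hμ : ∀ j, 0 < μ j) :
    log (Fintype.card ι) + (∑ j, log (μ j)) / Fintype.card ι ≤ log (∑ j, μ j) := by
  have := strictConcaveOn_log_Ioi.concaveOn.le_map_sum (t := univ)
    (w := fun _ => (Fintype.card ι : ℝ)⁻¹) (p := μ)
    (fun _ _ => by positivity) (by simp) (fun j _ => hμ j)
  rw [sum_inv_card_smul_log, log_sum_inv_card_smul hμ] at this
  linarith

theorem log_sum_eq_log_card_add_sum_log_div_iff (hμ : ∀ j, 0 < μ j) :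
    log (∑ j, μ j) = log (Fintype.card ι) + (∑ j, log (μ j)) / Fintype.card ι ↔
      ∀ j k, μ j = μ k := by
  have := strictConcaveOn_log_Ioi.map_sum_eq_iff_of_pos (t := univ)
    (w := fun _ => (Fintype.card ι : ℝ)⁻¹) (p := μ)
    (fun _ _ => by positivity) (by simp) (fun j _ => hμ j)
  rw [sum_inv_card_smul_log, log_sum_inv_card_smul hμ] at this
  simpa [sub_eq_iff_eq_add'] using this

end Real

namespace Matrix

variable {ι : Type*}

theorem IsHermitian.eq_smul_one_of_eigenvalues_eq {𝕜 : Type*} [RCLike 𝕜] [Fintype ι]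
    [DecidableEq ι] {A : Matrix ι ι 𝕜} (hA : A.IsHermitian) {c : ℝ}
    (h : ∀ i, hA.eigenvalues i = c) : A = c • 1 := by
  have hdiag : diagonal (RCLike.ofReal ∘ hA.eigenvalues) = c • (1 : Matrix ι ι 𝕜) := by
    ext i j
    simp [h, one_apply, diagonal_apply, RCLike.real_smul_eq_coe_mul]
  rw [hA.spectral_theorem, hdiag, Unitary.conjStarAlgAut_apply, mul_smul_comm, smul_mul_assoc,
    mul_one, Unitary.mul_star_self_of_mem hA.eigenvectorUnitary.2]

theorem PosDef.log_card_add_log_det_div_le_log_trace [Fintype ι] [DecidableEq ι] [Nonempty ι]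
    {H : Matrix ι ι ℝ} (hH : H.PosDef) :
    log (Fintype.card ι) + log H.det / Fintype.card ι ≤ log H.trace := by
  rw [hH.1.det_eq_prod_eigenvalues, hH.1.trace_eq_sum_eigenvalues]
  simp only [RCLike.ofReal_real_eq_id, id]
  rw [log_prod fun j _ => (hH.eigenvalues_pos j).ne']
  exact log_card_add_sum_log_div_le_log_sum hH.eigenvalues_pos

theorem PosDef.log_trace_eq_log_card_add_log_det_div_iff [Fintype ι] [DecidableEq ι] [Nonempty ι]
    {H : Matrix ι ι ℝ} (hH : H.PosDef) :
    log H.trace = log (Fintype.card ι) + log H.det / Fintype.card ι ↔ ∃ c : ℝ, H = c • 1 := by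
  constructor
  · rw [hH.1.det_eq_prod_eigenvalues, hH.1.trace_eq_sum_eigenvalues]
    simp only [RCLike.ofReal_real_eq_id, id]
    rw [log_prod fun j _ => (hH.eigenvalues_pos j).ne',
      log_sum_eq_log_card_add_sum_log_div_iff hH.eigenvalues_pos]
    intro h
    obtain ⟨k⟩ := ‹Nonempty ι›
    exact ⟨_, hH.1.eq_smul_one_of_eigenvalues_eq fun j => h j k⟩
  · rintro ⟨c, rfl⟩
    have hc : 0 < c := by simpa using hH.diag_pos (i := Classical.arbitrary ι)
    rw [trace_smul, trace_one, det_smul, det_one, smul_eq_mul, mul_one, mul_comm,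
      log_mul (by positivity) hc.ne', log_pow]
    field_simp

section Gram

variable {E : Type*} [NormedAddCommGroup E] [InnerProductSpace ℝ E]

theorem trace_gram [Fintype ι] (v : ι → E) : (gram ℝ v).trace = ∑ j, ‖v j‖ ^ 2 := by
  simp [trace]

theorem gram_eq_smul_one_iff [DecidableEq ι] (v : ι → E) (c : ℝ) :
    gram ℝ v = c • 1 ↔ (∀ j k, j ≠ k → ⟪v j, v k⟫ = 0) ∧ ∀ j, ‖v j‖ ^ 2 = c := by
  simp only [← Matrix.ext_iff, gram_apply, smul_apply, one_apply, smul_eq_mul, mul_ite, mul_one,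
    mul_zero]
  refine ⟨fun h => ⟨fun j k hjk => by simpa [hjk] using h j k, fun j => by simpa using h j j⟩,
    fun ⟨horth, hnorm⟩ j k => ?_⟩
  obtain rfl | hjk := eq_or_ne j k
  · simp [hnorm]
  · simp [hjk, horth j k hjk]

theorem exists_gram_eq_smul_one_iff [DecidableEq ι] [Nonempty ι] (v : ι → E) :
    (∃ c : ℝ, gram ℝ v = c • 1) ↔
      (∀ j k, j ≠ k → ⟪v j, v k⟫ = 0) ∧ ∀ j k, ‖v j‖ ^ 2 = ‖v k‖ ^ 2 := by
  simp only [gram_eq_smul_one_iff]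
  obtain ⟨k⟩ := ‹Nonempty ι›
  exact ⟨fun ⟨c, horth, hnorm⟩ => ⟨horth, fun j j' => by rw [hnorm, hnorm]⟩,
    fun ⟨horth, hnorm⟩ => ⟨_, horth, fun j => hnorm j k⟩⟩

theorem gram_smul [Fintype ι] [DecidableEq ι] (σ : ι → ℝ) (v : ι → E) :
    gram ℝ (fun j => σ j • v j) = diagonal σ * gram ℝ v * diagonal σ := by
  ext j k
  simp only [gram_apply, real_inner_smul_right, real_inner_smul_left, mul_diagonal, diagonal_mul]
  ring

theorem _root_.norm_smul_sq (r : ℝ) (x : E) : ‖r • x‖ ^ 2 = ‖x‖ ^ 2 * r ^ 2 := by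
  rw [norm_smul, mul_pow, Real.norm_eq_abs, sq_abs, mul_comm]

variable [Fintype ι] [DecidableEq ι] [Nonempty ι] {v : ι → E}

theorem _root_.LinearIndependent.log_card_add_log_det_gram_div_le (hv : LinearIndependent ℝ v) :
    log (Fintype.card ι) + log (gram ℝ v).det / Fintype.card ι ≤ log (∑ j, ‖v j‖ ^ 2) :=
  trace_gram v ▸ (posDef_gram_of_linearIndependent hv).log_card_add_log_det_div_le_log_trace

theorem _root_.LinearIndependent.log_sum_norm_sq_eq_iff (hv : LinearIndependent ℝ v) :
    log (∑ j, ‖v j‖ ^ 2) = log (Fintype.card ι) + log (gram ℝ v).det / Fintype.card ι ↔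
      (∀ j k, j ≠ k → ⟪v j, v k⟫ = 0) ∧ ∀ j k, ‖v j‖ ^ 2 = ‖v k‖ ^ 2 := by
  rw [← trace_gram, (posDef_gram_of_linearIndependent hv).log_trace_eq_log_card_add_log_det_div_iff,
    exists_gram_eq_smul_one_iff]

end Gram

section Columns

variable {m : Type*} [Fintype m]

def euclideanCol (A : Matrix m ι ℝ) (j : ι) : EuclideanSpace ℝ m :=
  (WithLp.equiv 2 (m → ℝ)).symm fun r => A r j

theorem gram_euclideanCol (A : Matrix m ι ℝ) : gram ℝ (euclideanCol A) = Aᵀ * A := by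
  ext j k
  simp [euclideanCol, mul_apply, PiLp.inner_apply, mul_comm]

variable [Fintype ι] [DecidableEq ι]

theorem det_transpose_mul_self_ne_zero {M : Matrix m ι ℝ} (hM : M.rank = Fintype.card ι) :
    (Mᵀ * M).det ≠ 0 := by
  rw [← isUnit_iff_ne_zero, ← isUnit_iff_isUnit_det, ← mulVec_surjective_iff_isUnit,
    ← coe_mulVecLin, ← LinearMap.range_eq_top]
  apply Submodule.eq_top_of_finrank_eq
  rw [← rank, rank_transpose_mul_self, hM, Module.finrank_fintype_fun_eq_card]

theorem det_transpose_mul_self_mul_transpose (M : Matrix m ι ℝ) {V : Matrix ι ι ℝ}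
    (hV : Vᵀ * V = 1) : ((M * Vᵀ)ᵀ * (M * Vᵀ)).det = (Mᵀ * M).det := by
  have hdetV : V.det * V.det = 1 := by simpa using congrArg det hV
  rw [transpose_mul, transpose_transpose,
    show V * Mᵀ * (M * Vᵀ) = V * (Mᵀ * M) * Vᵀ by simp only [Matrix.mul_assoc], det_mul, det_mul,
    det_transpose]
  linear_combination (Mᵀ * M).det * hdetV

variable {M : Matrix m ι ℝ} {V : Matrix ι ι ℝ} {σ : ι → ℝ}

theorem det_gram_smul_euclideanCol (M : Matrix m ι ℝ) (hV : Vᵀ * V = 1) (σ : ι → ℝ) :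
    (gram ℝ fun j => σ j • euclideanCol (M * Vᵀ) j).det = (Mᵀ * M).det * ∏ j, σ j ^ 2 := by
  rw [gram_smul, gram_euclideanCol, det_mul, det_mul, det_transpose_mul_self_mul_transpose M hV,
    det_diagonal, prod_pow]
  ring

theorem linearIndependent_smul_euclideanCol (hM : M.rank = Fintype.card ι) (hV : Vᵀ * V = 1)
    (hσ : ∀ j, σ j ≠ 0) : LinearIndependent ℝ fun j => σ j • euclideanCol (M * Vᵀ) j := by
  apply linearIndependent_of_det_gram_ne_zero
  rw [det_gram_smul_euclideanCol M hV]
  exact mul_ne_zero (det_transpose_mul_self_ne_zero hM)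
    (prod_ne_zero_iff.2 fun j _ => pow_ne_zero 2 (hσ j))

theorem log_det_gram_smul_euclideanCol (hM : M.rank = Fintype.card ι) (hV : Vᵀ * V = 1)
    (hσ : ∀ j, σ j ≠ 0) :
    log (gram ℝ fun j => σ j • euclideanCol (M * Vᵀ) j).det =
      log (Mᵀ * M).det + ∑ j, log (σ j ^ 2) := by
  rw [det_gram_smul_euclideanCol M hV, log_mul (det_transpose_mul_self_ne_zero hM)
      (prod_ne_zero_iff.2 fun j _ => pow_ne_zero 2 (hσ j)),
    log_prod fun j _ => pow_ne_zero 2 (hσ j)]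

variable [Nonempty ι]

theorem log_card_add_div_le_log_sum_norm_euclideanCol_sq_mul_sq (hM : M.rank = Fintype.card ι)
    (hV : Vᵀ * V = 1) (hσ : ∀ j, σ j ≠ 0) :
    log (Fintype.card ι) + (log (Mᵀ * M).det + ∑ j, log (σ j ^ 2)) / Fintype.card ι ≤
      log (∑ j, ‖euclideanCol (M * Vᵀ) j‖ ^ 2 * σ j ^ 2) := by
  simpa only [log_det_gram_smul_euclideanCol hM hV hσ, norm_smul_sq] using
    (linearIndependent_smul_euclideanCol hM hV hσ).log_card_add_log_det_gram_div_le

theorem log_sum_norm_euclideanCol_sq_mul_sq_eq_iff (hM : M.rank = Fintype.card ι)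
    (hV : Vᵀ * V = 1) (hσ : ∀ j, σ j ≠ 0) :
    log (∑ j, ‖euclideanCol (M * Vᵀ) j‖ ^ 2 * σ j ^ 2) =
        log (Fintype.card ι) + (log (Mᵀ * M).det + ∑ j, log (σ j ^ 2)) / Fintype.card ι ↔
      (∀ j k, j ≠ k → ⟪euclideanCol (M * Vᵀ) j, euclideanCol (M * Vᵀ) k⟫ = 0) ∧
        ∀ j k, ‖euclideanCol (M * Vᵀ) j‖ ^ 2 * σ j ^ 2 =
          ‖euclideanCol (M * Vᵀ) k‖ ^ 2 * σ k ^ 2 := by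
  simpa only [log_det_gram_smul_euclideanCol hM hV hσ, norm_smul_sq, real_inner_smul_left,
    real_inner_smul_right, mul_eq_zero, hσ, false_or] using
    (linearIndependent_smul_euclideanCol hM hV hσ).log_sum_norm_sq_eq_iff

end Columns

end Matrix

theorem vae_global_lower_bound_equality_iff_general
    (n d N : ℕ) (hd : 0 < d)
    (M : Fin N → Matrix (Fin n) (Fin d) ℝ) (hrank : ∀ i, (M i).rank = d)
    (V : Fin N → Matrix (Fin d) (Fin d) ℝ) (hV : ∀ i, (V i)ᵀ * V i = 1)
    (σ : Fin N → Fin d → ℝ) (hσ : ∀ i j, 0 < σ i j)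
    (C : ℝ) (hC : (∑ i, ∑ j, (-Real.log ((σ i j) ^ 2))) = C) :
    (∑ i, Real.log (∑ j,
        ‖(WithLp.equiv 2 (Fin n → ℝ)).symm (fun r => (M i * (V i)ᵀ) r j)‖ ^ 2 *
          (σ i j) ^ 2)) =
      (N : ℝ) * Real.log d - C / d +
        (1 / d : ℝ) * ∑ i, Real.log ((M i)ᵀ * M i).det ↔
    ∀ i,
      (∀ j k, j ≠ k →
        ⟪(WithLp.equiv 2 (Fin n → ℝ)).symm (fun r => (M i * (V i)ᵀ) r j),
          (WithLp.equiv 2 (Fin n → ℝ)).symm (fun r => (M i * (V i)ᵀ) r k)⟫ = 0) ∧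
      (∀ j k,
        ‖(WithLp.equiv 2 (Fin n → ℝ)).symm (fun r => (M i * (V i)ᵀ) r j)‖ ^ 2 * (σ i j) ^ 2 =
        ‖(WithLp.equiv 2 (Fin n → ℝ)).symm (fun r => (M i * (V i)ᵀ) r k)‖ ^ 2 *
          (σ i k) ^ 2) := by
  have : Nonempty (Fin d) := ⟨⟨0, hd⟩⟩
  have hrank' i : (M i).rank = Fintype.card (Fin d) := by rw [hrank i, Fintype.card_fin]
  have hσ' i j : σ i j ≠ 0 := (hσ i j).ne'
  have hrhs : (N : ℝ) * log d - C / d + (1 / d : ℝ) * ∑ i, log ((M i)ᵀ * M i).det =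
      ∑ i, (log (Fintype.card (Fin d)) +
        (log ((M i)ᵀ * M i).det + ∑ j, log (σ i j ^ 2)) / Fintype.card (Fin d)) := by
    simp only [← hC, Fintype.card_fin, sum_add_distrib, ← sum_div, sum_const, card_univ,
      sum_neg_distrib, nsmul_eq_mul]
    ring
  rw [hrhs, eq_comm]
  refine (sum_eq_sum_iff_of_le fun i _ =>
    log_card_add_div_le_log_sum_norm_euclideanCol_sq_mul_sq (hrank' i) (hV i) (hσ' i)).trans ?_
  simp only [mem_univ, true_implies]
  exact forall_congr' fun i =>
    eq_comm.trans (log_sum_norm_euclideanCol_sq_mul_sq_eq_iff (hrank' i) (hV i) (hσ' i))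

/-- **Main theorem, part (b): characterization of the global minima.** In the setting of the
global lower bound, equality
`∑_i log (∑_j ‖c_{ij}‖² σ_{ij}²) = N log d − C/d + (1/d) ∑_i log det (M_iᵀ M_i)`
holds if and only if for every `i` the columns of `M_i V_iᵀ` are pairwise orthogonal and the
quantities `‖c_{ij}‖² σ_{ij}²` are equal for all `j`. In particular, at every global minimum
every `M_i V_iᵀ` has pairwise orthogonal columns. -/
theorem vae_global_lower_bound_equality_iff
    (n d N : ℕ) (hn : 0 < n) (hd : 0 < d) (hN : 0 < N) (hdn : d ≤ n)
    (M : Fin N → Matrix (Fin n) (Fin d) ℝ) (hrank : ∀ i, (M i).rank = d)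
    (V : Fin N → Matrix (Fin d) (Fin d) ℝ) (hV : ∀ i, (V i)ᵀ * V i = 1)
    (σ : Fin N → Fin d → ℝ) (hσ : ∀ i j, 0 < σ i j)
    (C : ℝ) (hC : (∑ i, ∑ j, (-Real.log ((σ i j) ^ 2))) = C) :
    (∑ i, Real.log (∑ j,
        ‖(WithLp.equiv 2 (Fin n → ℝ)).symm (fun r => (M i * (V i)ᵀ) r j)‖ ^ 2 *
          (σ i j) ^ 2)) =
      (N : ℝ) * Real.log d - C / d +
        (1 / d : ℝ) * ∑ i, Real.log ((M i)ᵀ * M i).det ↔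
    ∀ i,
      (∀ j k, j ≠ k →
        ⟪(WithLp.equiv 2 (Fin n → ℝ)).symm (fun r => (M i * (V i)ᵀ) r j),
          (WithLp.equiv 2 (Fin n → ℝ)).symm (fun r => (M i * (V i)ᵀ) r k)⟫ = 0) ∧
      (∀ j k,
        ‖(WithLp.equiv 2 (Fin n → ℝ)).symm (fun r => (M i * (V i)ᵀ) r j)‖ ^ 2 * (σ i j) ^ 2 =
        ‖(WithLp.equiv 2 (Fin n → ℝ)).symm (fun r => (M i * (V i)ᵀ) r k)‖ ^ 2 *
          (σ i k) ^ 2) :=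
  vae_global_lower_bound_equality_iff_general n d N hd M hrank V hV σ hσ C hC
end

section
/- (Locally improving Hadamard's inequality.) Let k ≥ 2 and let M = U Σ Vᵀ be a nonsingular real k×k matrix, where U and V are k×k orthogonal matrices and Σ is a diagonal matrix with positive diagonal entries. Suppose the column vectors c₁, …, c_k of M satisfy ∏_{i=1}^k ‖c_i‖ > |det M| (strict Hadamard inequality, i.e. the columns are not pairwise orthogonal). Then for every ε > 0 there exists an orthogonal matrix V' with ‖V' − V‖ < ε such that the column vectors c'₁, …, c'_k of M' = U Σ V'ᵀ satisfy ∏_{i=1}^k ‖c'_i‖ < ∏_{i=1}^k ‖c_i‖. -/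
/-!
If the columns of `M` were pairwise orthogonal, the Gram matrix `Mᵀ M` would be diagonal and
`∏ ‖cᵢ‖ = |det M|`; so some pair of columns has `⟪cᵢ, cⱼ⟫ ≠ 0`. Rotating rows `i` and `j` of `V`
in their plane rotates the columns `cᵢ, cⱼ` of `M = U Σ Vᵀ` in the same way and fixes the others.
For `x, y` with `⟪x, y⟫ ≠ 0`, the deficit
`(1 + τ²)² ‖x‖² ‖y‖² - ‖x + τ y‖² ‖y - τ x‖² = τ (2⟪x, y⟫ - e τ) (e + 2⟪x, y⟫ τ)`,
`e = ‖x‖² - ‖y‖²`, is positive for a suitably signed small `τ`, so the rotation with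
`tan θ = τ` strictly decreases `‖x‖ ‖y‖` while moving `V` by `O(τ)` in Frobenius norm.
-/

open Matrix Topology RealInnerProductSpace WithLp

section RotatePair

variable {R ι E : Type*} [CommRing R] [DecidableEq ι] [AddCommGroup E] [Module R E]

noncomputable def rotatePair (i j : ι) (c s : R) (v : ι → E) : ι → E :=
  Function.update (Function.update v i (c • v i + s • v j)) j (c • v j - s • v i)

variable {i j : ι} (c s : R) (v : ι → E)

@[simp]
lemma rotatePair_apply_left (hij : i ≠ j) : rotatePair i j c s v i = c • v i + s • v j := by
  simp [rotatePair, hij]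

@[simp]
lemma rotatePair_apply_right : rotatePair i j c s v j = c • v j - s • v i := by
  simp [rotatePair]

lemma rotatePair_apply_of_ne {l : ι} (hi : l ≠ i) (hj : l ≠ j) :
    rotatePair i j c s v l = v l := by
  simp [rotatePair, hi, hj]

lemma comp_rotatePair {F : Type*} [AddCommGroup F] [Module R F] (f : E →ₗ[R] F) :
    f ∘ rotatePair i j c s v = rotatePair i j c s (f ∘ v) := by
  simp [rotatePair, Function.comp_update]

variable [Fintype ι] {F : Type*} [AddCommGroup F] [Module R F] (B : E →ₗ[R] E →ₗ[R] F)

lemma sum_bilin_rotatePair (hij : i ≠ j) (hcs : c ^ 2 + s ^ 2 = 1) :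
    ∑ l, B (rotatePair i j c s v l) (rotatePair i j c s v l) = ∑ l, B (v l) (v l) := by
  rw [← sub_eq_zero, ← Finset.sum_sub_distrib,
    Fintype.sum_eq_add i j hij fun l hl => by rw [rotatePair_apply_of_ne c s v hl.1 hl.2, sub_self]]
  simp only [rotatePair_apply_left c s v hij, rotatePair_apply_right, map_add, map_sub, map_smul,
    LinearMap.add_apply, LinearMap.sub_apply, LinearMap.smul_apply]
  linear_combination (norm := module) hcs • (B (v i) (v i) + B (v j) (v j))

lemma sum_bilin_rotatePair_sub (hij : i ≠ j) :
    ∑ l, B (rotatePair i j c s v l - v l) (rotatePair i j c s v l - v l) =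
      ((c - 1) ^ 2 + s ^ 2) • (B (v i) (v i) + B (v j) (v j)) := by
  rw [Fintype.sum_eq_add i j hij fun l hl => by simp [rotatePair_apply_of_ne c s v hl.1 hl.2]]
  simp only [rotatePair_apply_left c s v hij, rotatePair_apply_right, map_add, map_sub, map_smul,
    LinearMap.add_apply, LinearMap.sub_apply, LinearMap.smul_apply]
  module

end RotatePair

lemma prod_norm_rotatePair_lt {ι E : Type*} [Fintype ι] [DecidableEq ι] [NormedAddCommGroup E]
    [NormedSpace ℝ E] {i j : ι} (hij : i ≠ j) {c s : ℝ} {v : ι → E} (hv : ∀ l, v l ≠ 0)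
    (hlt : ‖c • v i + s • v j‖ * ‖c • v j - s • v i‖ < ‖v i‖ * ‖v j‖) :
    ∏ l, ‖rotatePair i j c s v l‖ < ∏ l, ‖v l‖ := by
  rw [← Finset.prod_mul_prod_compl {i, j}, ← Finset.prod_mul_prod_compl {i, j} (fun l => ‖v l‖),
    Finset.prod_pair hij, Finset.prod_pair hij, rotatePair_apply_left c s v hij,
    rotatePair_apply_right]
  have hcompl : ∏ l ∈ {i, j}ᶜ, ‖rotatePair i j c s v l‖ = ∏ l ∈ {i, j}ᶜ, ‖v l‖ :=
    Finset.prod_congr rfl fun l hl => by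
      simp only [Finset.mem_compl, Finset.mem_insert, Finset.mem_singleton, not_or] at hl
      rw [rotatePair_apply_of_ne c s v hl.1 hl.2]
  rw [hcompl]
  exact mul_lt_mul_of_pos_right hlt (Finset.prod_pos fun l _ => norm_pos_iff.2 (hv l))

lemma exists_sq_lt_and_pos_mul (b e : ℝ) (hb : b ≠ 0) {δ : ℝ} (hδ : 0 < δ) :
    ∃ τ : ℝ, τ ^ 2 < δ ∧ 0 < τ * (b - e * τ) * (e + b * τ) := by
  wlog he : 0 ≤ e generalizing e
  · obtain ⟨τ, hτδ, hτ⟩ := this (-e) (by linarith)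
    exact ⟨-τ, by rwa [neg_sq], by linarith⟩
  have hsmall : ∀ᶠ t in 𝓝 (0 : ℝ), e * t < 1 ∧ (t * b) ^ 2 < δ :=
    (ContinuousAt.eventually_lt (by fun_prop) (by fun_prop) (by simp)).and
      (ContinuousAt.eventually_lt (by fun_prop) (by fun_prop) (by simpa using hδ))
  obtain ⟨t, ⟨het, htδ⟩, ht⟩ :=
    ((hsmall.filter_mono nhdsWithin_le_nhds).and (self_mem_nhdsWithin (s := Set.Ioi 0))).exists
  refine ⟨t * b, htδ, ?_⟩
  have hpos : 0 < t * b ^ 2 * (1 - e * t) * (e + t * b ^ 2) := by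
    have : 0 < t := ht
    have := sub_pos.2 het
    positivity
  exact hpos.trans_eq (by ring)

section TwoVectors

variable {E : Type*} [NormedAddCommGroup E] [InnerProductSpace ℝ E] {x y : E}

lemma norm_add_smul_mul_norm_sub_smul_lt {τ : ℝ}
    (h : 0 < τ * (2 * ⟪x, y⟫ - (‖x‖ ^ 2 - ‖y‖ ^ 2) * τ) * (‖x‖ ^ 2 - ‖y‖ ^ 2 + 2 * ⟪x, y⟫ * τ)) :
    ‖x + τ • y‖ * ‖y - τ • x‖ < (1 + τ ^ 2) * (‖x‖ * ‖y‖) := by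
  refine lt_of_pow_lt_pow_left₀ 2 (by positivity) ?_
  rw [mul_pow, mul_pow, mul_pow, norm_add_sq_real, norm_sub_sq_real, norm_smul, norm_smul,
    real_inner_smul_right, real_inner_smul_right, real_inner_comm x y, Real.norm_eq_abs]
  simp only [mul_pow, sq_abs]
  linear_combination h

lemma exists_rotation_norm_mul_norm_lt (hxy : ⟪x, y⟫ ≠ 0) {δ : ℝ} (hδ : 0 < δ) :
    ∃ c s : ℝ, c ^ 2 + s ^ 2 = 1 ∧ (c - 1) ^ 2 + s ^ 2 < δ ∧
      ‖c • x + s • y‖ * ‖c • y - s • x‖ < ‖x‖ * ‖y‖ := by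
  obtain ⟨τ, hτδ, hτ⟩ :=
    exists_sq_lt_and_pos_mul (2 * ⟪x, y⟫) (‖x‖ ^ 2 - ‖y‖ ^ 2) (by simpa using hxy) (half_pos hδ)
  set r := √(1 + τ ^ 2)
  have hr : 0 < r := by positivity
  have hr2 : r ^ 2 = 1 + τ ^ 2 := Real.sq_sqrt (by positivity)
  have hcs : r⁻¹ ^ 2 + (τ * r⁻¹) ^ 2 = 1 := by
    field_simp
    linarith
  refine ⟨r⁻¹, τ * r⁻¹, hcs, ?_, ?_⟩
  · -- `(c - 1)² + s² = 2 (1 - r⁻¹) ≤ 2 (r² - 1) = 2 τ²`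
    have hr1 : 1 ≤ r := Real.one_le_sqrt.2 (by nlinarith)
    nlinarith [mul_inv_cancel₀ hr.ne', inv_pos.2 hr]
  · have hx : r⁻¹ • x + (τ * r⁻¹) • y = r⁻¹ • (x + τ • y) := by module
    have hy : r⁻¹ • y - (τ * r⁻¹) • x = r⁻¹ • (y - τ • x) := by module
    rw [hx, hy, norm_smul, norm_smul, Real.norm_eq_abs, abs_inv, abs_of_pos hr,
      mul_mul_mul_comm, ← mul_inv, ← sq, hr2, inv_mul_lt_iff₀ (by positivity)]
    exact norm_add_smul_mul_norm_sub_smul_lt hτ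

end TwoVectors

section Columns

variable {m n p α : Type*}

lemma transpose_mul_eq_sum_vecMulVec [Fintype m] [NonUnitalNonAssocSemiring α] (A : Matrix m n α)
    (B : Matrix m p α) : Aᵀ * B = ∑ r, vecMulVec (A r) (B r) := by
  ext a b
  simp [mul_apply, Matrix.sum_apply, vecMulVec_apply]

lemma gram_toLp_cols [Fintype m] (M : Matrix m n ℝ) :
    gram ℝ (fun l => toLp 2 (fun r => M r l)) = Mᵀ * M := by
  ext a b
  simp [gram_apply, mul_apply, PiLp.inner_apply, mul_comm]

lemma toLp_cols_mul_transpose [Fintype n] (A : Matrix m n ℝ) (B : Matrix p n ℝ) :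
    (fun l => toLp 2 (fun r => (A * Bᵀ) r l)) =
      ((WithLp.linearEquiv 2 ℝ (m → ℝ)).symm.toLinearMap ∘ₗ A.mulVecLin) ∘ B := by
  ext l r
  rfl

lemma abs_det_eq_prod_norm_cols_of_pairwise_inner_eq_zero [Fintype m] [DecidableEq m]
    (M : Matrix m m ℝ)
    (h : Pairwise fun a b => ⟪toLp 2 (fun r => M r a), toLp 2 (fun r => M r b)⟫ = 0) :
    |M.det| = ∏ l, ‖toLp 2 (fun r => M r l)‖ := by
  have hdiag : gram ℝ (fun l => toLp 2 (fun r => M r l)) =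
      diagonal fun l => ‖toLp 2 (fun r => M r l)‖ ^ 2 := by
    ext a b
    rcases eq_or_ne a b with rfl | hab
    · simp [gram_apply]
    · simp [gram_apply, hab, h hab]
  refine (pow_left_inj₀ (abs_nonneg _) (by positivity) two_ne_zero).1 ?_
  rw [sq_abs, ← Finset.prod_pow, ← det_diagonal, ← hdiag, gram_toLp_cols, det_mul, det_transpose,
    sq]

end Columns

theorem locally_improving_hadamard_general
    (k : ℕ)
    (U V S : Matrix (Fin k) (Fin k) ℝ)
    (hV : Vᵀ * V = 1)
    (hstrict : |(U * S * Vᵀ).det| <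
      ∏ i, ‖(WithLp.equiv 2 (Fin k → ℝ)).symm (fun r => (U * S * Vᵀ) r i)‖) :
    ∀ ε > (0 : ℝ), ∃ V' : Matrix (Fin k) (Fin k) ℝ,
      V'ᵀ * V' = 1 ∧
      Real.sqrt (∑ r, ∑ c, (V' r c - V r c) ^ 2) < ε ∧
      (∏ i, ‖(WithLp.equiv 2 (Fin k → ℝ)).symm (fun r => (U * S * V'ᵀ) r i)‖) <
        ∏ i, ‖(WithLp.equiv 2 (Fin k → ℝ)).symm (fun r => (U * S * Vᵀ) r i)‖ := by
  intro ε hε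
  simp only [WithLp.equiv_symm_apply] at hstrict ⊢
  set C := fun l => toLp 2 (fun r => (U * S * Vᵀ) r l)
  obtain ⟨i, j, hij, hCij⟩ : ∃ i j, i ≠ j ∧ ⟪C i, C j⟫ ≠ 0 := by
    by_contra! h
    exact hstrict.ne (abs_det_eq_prod_norm_cols_of_pairwise_inner_eq_zero _ fun a b => h a b)
  obtain ⟨c, s, hcs, hdist, hlt⟩ :=
    exists_rotation_norm_mul_norm_lt hCij (by positivity : 0 < ε ^ 2 / 2)
  refine ⟨of (rotatePair i j c s V), ?_, ?_, ?_⟩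
  · rw [transpose_mul_eq_sum_vecMulVec] at hV ⊢
    exact (sum_bilin_rotatePair c s V (vecMulVecBilin ℝ ℝ) hij hcs).trans hV
  · have hrow : ∀ p, V p ⬝ᵥ V p = 1 := fun p => by
      simpa [mul_apply'] using Matrix.ext_iff.mpr (mul_eq_one_comm.mp hV) p p
    have hsum := sum_bilin_rotatePair_sub c s V (dotProductBilin ℝ ℝ) hij
    simp only [dotProductBilin_apply_apply, hrow] at hsum
    rw [Real.sqrt_lt' hε]
    calc ∑ r, ∑ q, (of (rotatePair i j c s V) r q - V r q) ^ 2
        = ∑ r, (rotatePair i j c s V r - V r) ⬝ᵥ (rotatePair i j c s V r - V r) := by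
          simp [dotProduct, sq]
      _ = ((c - 1) ^ 2 + s ^ 2) * 2 := by rw [hsum, smul_eq_mul, one_add_one_eq_two]
      _ < ε ^ 2 := by linarith
  · have hC0 : ∀ l, C l ≠ 0 := fun l => norm_ne_zero_iff.1 <|
      Finset.prod_ne_zero_iff.1 ((abs_nonneg _).trans_lt hstrict).ne' l (Finset.mem_univ l)
    have hcols : (fun l => toLp 2 fun r => (U * S * (of (rotatePair i j c s V))ᵀ) r l) =
        rotatePair i j c s C := by
      rw [toLp_cols_mul_transpose]
      exact comp_rotatePair c s V _
    have hprod := prod_norm_rotatePair_lt hij hC0 hlt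
    rw [← hcols] at hprod
    exact hprod

/-- **Locally improving Hadamard's inequality.** Let `k ≥ 2` and `M = U Σ Vᵀ` be a
nonsingular real `k × k` matrix with `U, V` orthogonal and `Σ` diagonal with positive
diagonal entries. If the columns `c_i` of `M` satisfy the strict Hadamard inequality
`∏_i ‖c_i‖ > |det M|`, then for every `ε > 0` there is an orthogonal `V'` with
`‖V' − V‖_F < ε` such that the columns `c'_i` of `M' = U Σ V'ᵀ` satisfy
`∏_i ‖c'_i‖ < ∏_i ‖c_i‖`. -/
theorem locally_improving_hadamard
    (k : ℕ) (hk : 2 ≤ k)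
    (U V S : Matrix (Fin k) (Fin k) ℝ)
    (hU : Uᵀ * U = 1) (hV : Vᵀ * V = 1)
    (hSdiag : ∀ i j, i ≠ j → S i j = 0) (hSpos : ∀ i, 0 < S i i)
    (hstrict : |(U * S * Vᵀ).det| <
      ∏ i, ‖(WithLp.equiv 2 (Fin k → ℝ)).symm (fun r => (U * S * Vᵀ) r i)‖) :
    ∀ ε > (0 : ℝ), ∃ V' : Matrix (Fin k) (Fin k) ℝ,
      V'ᵀ * V' = 1 ∧
      Real.sqrt (∑ r, ∑ c, (V' r c - V r c) ^ 2) < ε ∧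
      (∏ i, ‖(WithLp.equiv 2 (Fin k → ℝ)).symm (fun r => (U * S * V'ᵀ) r i)‖) <
        ∏ i, ‖(WithLp.equiv 2 (Fin k → ℝ)).symm (fun r => (U * S * Vᵀ) r i)‖ :=
  locally_improving_hadamard_general k U V S hV hstrict
end
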